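/- For every n ≥ 1, the first player (Red) has a winning strategy in finite Hex on the n×n board: a Red strategy such that every complete play consistent with it results in a total coloring that Red wins. -/

import Mathlib

/-- Hex adjacency on the integer grid: `p` and `q` are adjacent iff
`q - p ∈ {(1,0), (-1,0), (0,1), (0,-1), (1,1), (-1,-1)}`. -/
def HexAdj (p q : ℤ × ℤ) : Prop :=
  q - p ∈ ({(1, 0), (-1, 0), (0, 1), (0, -1), (1, 1), (-1, -1)} : Set (ℤ × ℤ))

/-- The integer coordinates of a cell of the `n × n` board. -/
def finCell {n : ℕ} (p : Fin n × Fin n) : ℤ × ℤ := ((p.1 : ℤ), (p.2 : ℤ))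

/-- Red wins a (partial) coloring of the `n × n` Hex board: there is a finite sequence of
cells, consecutive ones adjacent, all colored `some true`, whose first cell has first
coordinate `0` and whose last cell has first coordinate `n - 1`. -/
def RedWinsFin {n : ℕ} (c : Fin n × Fin n → Option Bool) : Prop :=
  ∃ k : ℕ, ∃ f : Fin (k + 1) → Fin n × Fin n,
    (∀ i : Fin k, HexAdj (finCell (f i.castSucc)) (finCell (f i.succ))) ∧
    (∀ i, c (f i) = some true) ∧
    ((f 0).1 : ℕ) = 0 ∧ ((f (Fin.last k)).1 : ℕ) = n - 1

/-- Blue wins a (partial) coloring of the `n × n` Hex board: there is a finite sequence of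
cells, consecutive ones adjacent, all colored `some false`, whose first cell has second
coordinate `0` and whose last cell has second coordinate `n - 1`. -/
def BlueWinsFin {n : ℕ} (c : Fin n × Fin n → Option Bool) : Prop :=
  ∃ k : ℕ, ∃ f : Fin (k + 1) → Fin n × Fin n,
    (∀ i : Fin k, HexAdj (finCell (f i.castSucc)) (finCell (f i.succ))) ∧
    (∀ i, c (f i) = some false) ∧
    ((f 0).2 : ℕ) = 0 ∧ ((f (Fin.last k)).2 : ℕ) = n - 1

/-- Red wins a total coloring of the `n × n` board. -/
def RedWinsTotal {n : ℕ} (χ : Fin n × Fin n → Bool) : Prop :=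
  RedWinsFin (fun p => some (χ p))

/-
Hex cannot end in a draw. Placing the board in a board of the game of Y, red to its left and blue
above it, reduces this to Y, where some color connects all three sides of the triangle: by
induction on its size, since replacing the color of each small triangle `{p, p + (1, 0),
p + (1, 1)}` by the majority color gives a coloring of the next smaller board, and a connection
there lifts to a connection on the larger one.

With no draws, the first player wins by strategy stealing. If Red could not force a win, Blue
could; transposing the board by `(i, j) ↦ (j, i)` and exchanging the colors turns Blue's win into
a win for Red moving second, and an extra red stone never hurts Red.
-/

theorem hexAdj_iff {p q : ℤ × ℤ} : HexAdj p q ↔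
    (q.1 - p.1 = 1 ∧ q.2 - p.2 = 0) ∨ (q.1 - p.1 = -1 ∧ q.2 - p.2 = 0) ∨
    (q.1 - p.1 = 0 ∧ q.2 - p.2 = 1) ∨ (q.1 - p.1 = 0 ∧ q.2 - p.2 = -1) ∨
    (q.1 - p.1 = 1 ∧ q.2 - p.2 = 1) ∨ (q.1 - p.1 = -1 ∧ q.2 - p.2 = -1) := by
  simp [HexAdj, Prod.ext_iff]

theorem HexAdj.symm {p q : ℤ × ℤ} (h : HexAdj p q) : HexAdj q p := by
  rw [hexAdj_iff] at h ⊢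
  omega

theorem HexAdj.le_add_one {p q : ℤ × ℤ} (h : HexAdj p q) :
    q.1 ≤ p.1 + 1 ∧ p.1 ≤ q.1 + 1 ∧ q.2 ≤ p.2 + 1 ∧ p.2 ≤ q.2 + 1 := by
  rw [hexAdj_iff] at h
  omega

theorem hexAdj_sub_right {p q : ℤ × ℤ} (v : ℤ × ℤ) : HexAdj (p - v) (q - v) ↔ HexAdj p q := by
  simp [HexAdj]

theorem hexAdj_self_add {p : ℤ × ℤ} {d : ℤ × ℤ} (hd : d = (1, 0) ∨ d = (0, 1) ∨ d = (1, 1)) :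
    HexAdj p (p + d) := by
  rcases hd with rfl | rfl | rfl <;> simp [HexAdj]

def Linked (S : Set (ℤ × ℤ)) : ℤ × ℤ → ℤ × ℤ → Prop :=
  Relation.ReflTransGen fun p q => p ∈ S ∧ q ∈ S ∧ HexAdj p q

namespace Linked

variable {S : Set (ℤ × ℤ)} {x y z : ℤ × ℤ}

theorem symm (h : Linked S x y) : Linked S y x :=
  have : Std.Symm fun p q => p ∈ S ∧ q ∈ S ∧ HexAdj p q := ⟨fun _ _ h => ⟨h.2.1, h.1, h.2.2.symm⟩⟩
  Relation.ReflTransGen.stdSymm.symm _ _ h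

theorem trans (h : Linked S x y) (h' : Linked S y z) : Linked S x z :=
  Relation.ReflTransGen.trans h h'

theorem of_eq_or_hexAdj (hx : x ∈ S) (hy : y ∈ S) (h : x = y ∨ HexAdj x y) : Linked S x y := by
  rcases h with rfl | h
  · exact Relation.ReflTransGen.refl
  · exact Relation.ReflTransGen.single ⟨hx, hy, h⟩

/-- A discrete intermediate value theorem. -/
theorem exists_crossing (φ : ℤ × ℤ → ℤ) (hφ : ∀ p q, HexAdj p q → φ q ≤ φ p + 1)
    {K : ℤ} (h : Linked S x y) (hx : x ∈ S) (hKx : φ x ≤ K) (hKy : K ≤ φ y) :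
    ∃ z ∈ S, φ z = K ∧ Linked {p ∈ S | K ≤ φ p} z y := by
  suffices x ∈ S → (K ≤ φ x ∧ Linked {p ∈ S | K ≤ φ p} x y) ∨
      ∃ z ∈ S, φ z = K ∧ Linked {p ∈ S | K ≤ φ p} z y by
    rcases this hx with ⟨hKx', hxy⟩ | hz
    · exact ⟨x, hx, le_antisymm hKx hKx', hxy⟩
    · exact hz
  refine Relation.ReflTransGen.head_induction_on h (fun _ => .inl ⟨hKy, .refl⟩) ?_
  rintro a c ⟨ha, hc, hac⟩ - ih -
  rcases ih hc with ⟨hKc, hcy⟩ | hz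
  · by_cases hKa : K ≤ φ a
    · exact .inl ⟨hKa, .head ⟨⟨ha, hKa⟩, ⟨hc, hKc⟩, hac⟩ hcy⟩
    · exact .inr ⟨c, hc, by linarith [hφ a c hac], hcy⟩
  · exact .inr hz

theorem exists_path (h : Linked S x y) (hx : x ∈ S) :
    ∃ k, ∃ g : Fin (k + 1) → ℤ × ℤ, g 0 = x ∧ g (Fin.last k) = y ∧ (∀ i, g i ∈ S) ∧
      ∀ i : Fin k, HexAdj (g i.castSucc) (g i.succ) := by
  induction h using Relation.ReflTransGen.head_induction_on with
  | refl => exact ⟨0, fun _ => y, rfl, rfl, fun _ => hx, fun i => i.elim0⟩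
  | head hac _ ih =>
    obtain ⟨k, g, hg0, hglast, hgS, hgadj⟩ := ih hac.2.1
    refine ⟨k + 1, Fin.cons _ g, rfl, by simpa using hglast, Fin.cases hx hgS, ?_⟩
    refine Fin.cases ?_ fun i => ?_
    · simpa [hg0] using hac.2.2
    · simpa [← Fin.succ_castSucc] using hgadj i

end Linked

/-- The Y-board of size `m`: a triangle with sides `y = 0`, `x = y` and `x = m - 1`. -/
def triangle (m : ℕ) : Set (ℤ × ℤ) := {p | 0 ≤ p.2 ∧ p.2 ≤ p.1 ∧ p.1 < m}

def smallTriangle (p : ℤ × ℤ) : Set (ℤ × ℤ) := {p, p + (1, 0), p + (1, 1)}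

def majority (a b c : Bool) : Bool := a && b || b && c || a && c

theorem majority_eq_iff {a b c v : Bool} :
    majority a b c = v ↔ (a = v ∨ b = v) ∧ (a = v ∨ c = v) ∧ (b = v ∨ c = v) := by
  cases a <;> cases b <;> cases c <;> cases v <;> decide

/-- Turns a coloring of the Y-board of size `m + 1` into one of the board of size `m`. -/
def shrink (χ : ℤ × ℤ → Bool) (p : ℤ × ℤ) : Bool :=
  majority (χ p) (χ (p + (1, 0))) (χ (p + (1, 1)))

def ConnectsSides (m : ℕ) (χ : ℤ × ℤ → Bool) (c : Bool) : Prop :=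
  ∃ a ∈ triangle m ∩ χ ⁻¹' {c}, ∃ b ∈ triangle m ∩ χ ⁻¹' {c}, ∃ d ∈ triangle m ∩ χ ⁻¹' {c},
    a.2 = 0 ∧ b.1 = b.2 ∧ d.1 = m - 1 ∧
    Linked (triangle m ∩ χ ⁻¹' {c}) a b ∧ Linked (triangle m ∩ χ ⁻¹' {c}) a d

theorem smallTriangle_subset_triangle {m : ℕ} {p : ℤ × ℤ} (hp : p ∈ triangle m) :
    smallTriangle p ⊆ triangle (m + 1) := by
  obtain ⟨h1, h2, h3⟩ := hp
  rintro x (rfl | rfl | rfl) <;> simp only [triangle, Set.mem_ofPred_eq, Prod.fst_add,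
    Prod.snd_add] <;> push_cast <;> omega

theorem eq_or_hexAdj_of_mem_smallTriangle {p u v : ℤ × ℤ} (hu : u ∈ smallTriangle p)
    (hv : v ∈ smallTriangle p) : u = v ∨ HexAdj u v := by
  rcases hu with rfl | rfl | rfl <;> rcases hv with rfl | rfl | rfl <;>
    simp [HexAdj, Prod.ext_iff]

theorem exists_bridge_of_eq_add {χ : ℤ × ℤ → Bool} {c : Bool} {p q : ℤ × ℤ}
    (hq : q = p + (1, 0) ∨ q = p + (0, 1) ∨ q = p + (1, 1))
    (hp : shrink χ p = c) (hq' : shrink χ q = c) :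
    ∃ u ∈ smallTriangle p, ∃ v ∈ smallTriangle q, χ u = c ∧ χ v = c ∧ (u = v ∨ HexAdj u v) := by
  rw [shrink, majority_eq_iff] at hp hq'
  rcases hq with rfl | rfl | rfl
  · by_cases hs : χ (p + (1, 0)) = c
    · exact ⟨_, .inr (.inl rfl), _, .inl rfl, hs, hs, .inl rfl⟩
    · refine ⟨p + (1, 1), .inr (.inr rfl), p + (1, 0) + (1, 1), .inr (.inr rfl), by tauto,
        by tauto, .inr ?_⟩
      rw [add_right_comm]
      exact hexAdj_self_add (.inl rfl)
  · have hs_eq : p + (0, 1) + (1, 0) = p + (1, 1) := by rw [add_assoc]; rfl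
    rw [hs_eq] at hq'
    by_cases hs : χ (p + (1, 1)) = c
    · exact ⟨_, .inr (.inr rfl), _, .inr (.inl hs_eq.symm), hs, hs, .inl rfl⟩
    · exact ⟨p, .inl rfl, p + (0, 1), .inl rfl, by tauto, by tauto,
        .inr (hexAdj_self_add (.inr (.inl rfl)))⟩
  · by_cases hs : χ (p + (1, 1)) = c
    · exact ⟨_, .inr (.inr rfl), _, .inl rfl, hs, hs, .inl rfl⟩
    · refine ⟨p + (1, 0), .inr (.inl rfl), p + (1, 1) + (1, 0), .inr (.inl rfl), by tauto,
        by tauto, .inr ?_⟩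
      rw [add_right_comm]
      exact hexAdj_self_add (.inr (.inr rfl))

theorem exists_bridge {χ : ℤ × ℤ → Bool} {c : Bool} {p q : ℤ × ℤ} (hpq : HexAdj p q)
    (hp : shrink χ p = c) (hq : shrink χ q = c) :
    ∃ u ∈ smallTriangle p, ∃ v ∈ smallTriangle q, χ u = c ∧ χ v = c ∧ (u = v ∨ HexAdj u v) := by
  have hdir : (q = p + (1, 0) ∨ q = p + (0, 1) ∨ q = p + (1, 1)) ∨
      (p = q + (1, 0) ∨ p = q + (0, 1) ∨ p = q + (1, 1)) := by
    rw [hexAdj_iff] at hpq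
    simp only [Prod.ext_iff, Prod.fst_add, Prod.snd_add]
    omega
  rcases hdir with hd | hd
  · exact exists_bridge_of_eq_add hd hp hq
  · obtain ⟨u, hu, v, hv, hcu, hcv, huv⟩ := exists_bridge_of_eq_add hd hq hp
    exact ⟨v, hv, u, hu, hcv, hcu, huv.imp Eq.symm HexAdj.symm⟩

theorem Linked.lift_shrink {m : ℕ} {χ : ℤ × ℤ → Bool} {c : Bool} {a b : ℤ × ℤ}
    (h : Linked (triangle m ∩ shrink χ ⁻¹' {c}) a b) (ha : a ∈ triangle m ∩ shrink χ ⁻¹' {c})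
    (hb : b ∈ triangle m) {a' b' : ℤ × ℤ} (ha' : a' ∈ smallTriangle a) (hca' : χ a' = c)
    (hb' : b' ∈ smallTriangle b) (hcb' : χ b' = c) :
    Linked (triangle (m + 1) ∩ χ ⁻¹' {c}) a' b' := by
  induction h using Relation.ReflTransGen.head_induction_on generalizing a' with
  | refl =>
    exact .of_eq_or_hexAdj ⟨smallTriangle_subset_triangle hb ha', hca'⟩
      ⟨smallTriangle_subset_triangle hb hb', hcb'⟩ (eq_or_hexAdj_of_mem_smallTriangle ha' hb')
  | @head a e hae _ ih =>
    obtain ⟨ha, he, hadj⟩ := hae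
    obtain ⟨u, hu, v, hv, hcu, hcv, huv⟩ := exists_bridge hadj ha.2 he.2
    have hsub := smallTriangle_subset_triangle ha.1
    have hsub' := smallTriangle_subset_triangle he.1
    have hau : Linked (triangle (m + 1) ∩ χ ⁻¹' {c}) a' u :=
      .of_eq_or_hexAdj ⟨hsub ha', hca'⟩ ⟨hsub hu, hcu⟩ (eq_or_hexAdj_of_mem_smallTriangle ha' hu)
    have huv : Linked (triangle (m + 1) ∩ χ ⁻¹' {c}) u v :=
      .of_eq_or_hexAdj ⟨hsub hu, hcu⟩ ⟨hsub' hv, hcv⟩ huv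
    exact hau.trans (huv.trans (ih he hv hcv))

theorem connectsSides_shrink {m : ℕ} {χ : ℤ × ℤ → Bool} {c : Bool}
    (h : ConnectsSides m (shrink χ) c) : ConnectsSides (m + 1) χ c := by
  obtain ⟨a, ha, b, hb, d, hd, ha2, hb12, hd1, hab, had⟩ := h
  -- Each side of the larger board holds two cells of the small triangle at a cell on the
  -- corresponding side of the smaller one, and a majority color occupies one of any two cells.
  obtain ⟨hbottom, -, -⟩ := majority_eq_iff.1 ha.2
  obtain ⟨-, hdiag, -⟩ := majority_eq_iff.1 hb.2
  obtain ⟨-, -, hright⟩ := majority_eq_iff.1 hd.2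
  obtain ⟨a', ha', hca', ha2'⟩ : ∃ a' ∈ smallTriangle a, χ a' = c ∧ a'.2 = 0 := by
    rcases hbottom with h | h
    · exact ⟨a, .inl rfl, h, ha2⟩
    · exact ⟨a + (1, 0), .inr (.inl rfl), h, by simp [ha2]⟩
  obtain ⟨b', hb', hcb', hb12'⟩ : ∃ b' ∈ smallTriangle b, χ b' = c ∧ b'.1 = b'.2 := by
    rcases hdiag with h | h
    · exact ⟨b, .inl rfl, h, hb12⟩
    · exact ⟨b + (1, 1), .inr (.inr rfl), h, by simp [hb12]⟩
  obtain ⟨d', hd', hcd', hd1''⟩ : ∃ d' ∈ smallTriangle d, χ d' = c ∧ d'.1 = (m + 1 : ℕ) - 1 := by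
    rcases hright with h | h
    · exact ⟨d + (1, 0), .inr (.inl rfl), h, by simp [hd1]⟩
    · exact ⟨d + (1, 1), .inr (.inr rfl), h, by simp [hd1]⟩
  exact ⟨a', ⟨smallTriangle_subset_triangle ha.1 ha', hca'⟩,
    b', ⟨smallTriangle_subset_triangle hb.1 hb', hcb'⟩,
    d', ⟨smallTriangle_subset_triangle hd.1 hd', hcd'⟩, ha2', hb12', hd1'',
    hab.lift_shrink ha hb.1 ha' hca' hb' hcb', had.lift_shrink ha hd.1 ha' hca' hd' hcd'⟩

theorem exists_connectsSides {m : ℕ} (hm : 1 ≤ m) (χ : ℤ × ℤ → Bool) :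
    ∃ c, ConnectsSides m χ c := by
  induction m, hm using Nat.le_induction generalizing χ with
  | base =>
    have h0 : ((0, 0) : ℤ × ℤ) ∈ triangle 1 ∩ χ ⁻¹' {χ (0, 0)} := ⟨by simp [triangle], rfl⟩
    exact ⟨χ (0, 0), _, h0, _, h0, _, h0, rfl, rfl, by simp, .refl, .refl⟩
  | succ m _ ih =>
    obtain ⟨c, hc⟩ := ih (shrink χ)
    exact ⟨c, connectsSides_shrink hc⟩

def BlueWinsTotal {n : ℕ} (χ : Fin n × Fin n → Bool) : Prop :=
  BlueWinsFin fun p => some (χ p)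

section Embedding

variable {n : ℕ} (hn : 0 < n) {χ : Fin n × Fin n → Bool} {p : ℤ × ℤ}

def hexSquare (n : ℕ) : Set (ℤ × ℤ) :=
  {p | n - 1 ≤ p.1 ∧ p.1 ≤ 2 * n - 2 ∧ 0 ≤ p.2 ∧ p.2 ≤ n - 1}

def toCell (p : ℤ × ℤ) : Fin n × Fin n :=
  (⟨min (p.1 - (n - 1)).toNat (n - 1), by omega⟩, ⟨min p.2.toNat (n - 1), by omega⟩)

theorem finCell_toCell (hp : p ∈ hexSquare n) : finCell (toCell hn p) = p - ((n : ℤ) - 1, 0) := by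
  obtain ⟨h1, h2, h3, h4⟩ := hp
  ext <;> simp only [finCell, toCell, Prod.fst_sub, Prod.snd_sub] <;> push_cast <;> omega

variable (χ) in
open Classical in
/-- The Hex board, placed in the Y-board of size `2n - 1` as the square `hexSquare n`, with the
part of the triangle to its left colored red and the part above it colored blue. -/
noncomputable def yColoring (p : ℤ × ℤ) : Bool :=
  if p ∈ hexSquare n then χ (toCell hn p) else decide (p.1 < n - 1)

theorem yColoring_of_mem (hp : p ∈ hexSquare n) : yColoring hn χ p = χ (toCell hn p) :=
  if_pos hp

theorem bounds_of_yColoring_eq_true (hp : p ∈ triangle (2 * n - 1))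
    (h : yColoring hn χ p = true) : p.2 ≤ n - 1 ∧ (n - 1 ≤ p.1 → p ∈ hexSquare n) := by
  obtain ⟨h1, h2, h3⟩ := hp
  by_cases hs : p ∈ hexSquare n
  · exact ⟨hs.2.2.2, fun _ => hs⟩
  · rw [yColoring, if_neg hs, decide_eq_true_iff] at h
    omega

theorem bounds_of_yColoring_eq_false (hp : p ∈ triangle (2 * n - 1))
    (h : yColoring hn χ p = false) : n - 1 ≤ p.1 ∧ (p.2 ≤ n - 1 → p ∈ hexSquare n) := by
  obtain ⟨h1, h2, h3⟩ := hp
  by_cases hs : p ∈ hexSquare n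
  · exact ⟨hs.1, fun _ => hs⟩
  · rw [yColoring, if_neg hs, decide_eq_false_iff_not] at h
    refine ⟨by omega, fun h4 => ⟨by omega, by omega, h1, h4⟩⟩

theorem Linked.exists_hexPath {c : Bool} {S : Set (ℤ × ℤ)} {x y : ℤ × ℤ}
    (hS : ∀ p ∈ S, p ∈ hexSquare n ∧ χ (toCell hn p) = c) (h : Linked S x y) (hx : x ∈ S) :
    ∃ k, ∃ f : Fin (k + 1) → Fin n × Fin n,
      (∀ i : Fin k, HexAdj (finCell (f i.castSucc)) (finCell (f i.succ))) ∧
      (∀ i, some (χ (f i)) = some c) ∧ f 0 = toCell hn x ∧ f (Fin.last k) = toCell hn y := by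
  obtain ⟨k, g, hg0, hglast, hgS, hgadj⟩ := h.exists_path hx
  refine ⟨k, toCell hn ∘ g, fun i => ?_, fun i => by simp [(hS _ (hgS i)).2], by simp [hg0],
    by simp [hglast]⟩
  simpa [finCell_toCell hn (hS _ (hgS _)).1, hexAdj_sub_right] using hgadj i

theorem redWinsTotal_of_connectsSides (h : ConnectsSides (2 * n - 1) (yColoring hn χ) true) :
    RedWinsTotal χ := by
  obtain ⟨a, -, b, hb, d, -, -, hb12, hd1, hab, had⟩ := h
  have hb1 : b.1 ≤ n - 1 := hb12 ▸ (bounds_of_yColoring_eq_true hn hb.1 hb.2).1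
  obtain ⟨z, hz, hz1, hzd⟩ := (Linked.trans hab.symm had).exists_crossing Prod.fst
    (fun _ _ h => h.le_add_one.1) hb hb1 (by omega)
  have hS : ∀ p ∈ {p ∈ triangle (2 * n - 1) ∩ yColoring hn χ ⁻¹' {true} | n - 1 ≤ p.1},
      p ∈ hexSquare n ∧ χ (toCell hn p) = true := fun p ⟨hp, hp1⟩ =>
    have hsq := (bounds_of_yColoring_eq_true hn hp.1 hp.2).2 hp1
    ⟨hsq, (yColoring_of_mem (χ := χ) hn hsq).symm.trans hp.2⟩
  obtain ⟨k, f, hadj, hcol, hf0, hflast⟩ := hzd.exists_hexPath hn hS ⟨hz, hz1.ge⟩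
  refine ⟨k, f, hadj, hcol, ?_, ?_⟩
  · rw [hf0]
    show min (z.1 - (n - 1)).toNat (n - 1) = 0
    omega
  · rw [hflast]
    show min (d.1 - (n - 1)).toNat (n - 1) = n - 1
    omega

theorem blueWinsTotal_of_connectsSides (h : ConnectsSides (2 * n - 1) (yColoring hn χ) false) :
    BlueWinsTotal χ := by
  obtain ⟨a, ha, b, hb, -, -, ha2, hb12, -, hab, -⟩ := h
  have hb2 : n - 1 ≤ b.2 := hb12 ▸ (bounds_of_yColoring_eq_false hn hb.1 hb.2).1
  obtain ⟨z, hz, hz2, hza⟩ := hab.symm.exists_crossing (fun p => -p.2)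
    (fun _ _ h => by linarith [h.le_add_one]) hb (K := -(n - 1)) (by omega) (by omega)
  have hS : ∀ p ∈ {p ∈ triangle (2 * n - 1) ∩ yColoring hn χ ⁻¹' {false} | -(n - 1) ≤ -p.2},
      p ∈ hexSquare n ∧ χ (toCell hn p) = false := fun p ⟨hp, hp2⟩ =>
    have hsq := (bounds_of_yColoring_eq_false hn hp.1 hp.2).2 (by omega)
    ⟨hsq, (yColoring_of_mem (χ := χ) hn hsq).symm.trans hp.2⟩
  obtain ⟨k, f, hadj, hcol, hf0, hflast⟩ := hza.symm.exists_hexPath hn hS ⟨ha, by omega⟩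
  refine ⟨k, f, hadj, hcol, ?_, ?_⟩
  · rw [hf0]
    show min a.2.toNat (n - 1) = 0
    omega
  · rw [hflast]
    show min z.2.toNat (n - 1) = n - 1
    omega

end Embedding

theorem redWinsTotal_or_blueWinsTotal {n : ℕ} (hn : 0 < n) (χ : Fin n × Fin n → Bool) :
    RedWinsTotal χ ∨ BlueWinsTotal χ := by
  obtain ⟨c, hc⟩ := exists_connectsSides (m := 2 * n - 1) (by omega) (yColoring hn χ)
  cases c
  · exact .inr (blueWinsTotal_of_connectsSides hn hc)
  · exact .inl (redWinsTotal_of_connectsSides hn hc)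

namespace PositionalGame

open Finset

section Game

variable {α : Type*} [Fintype α] [DecidableEq α] (W : Finset α → Prop)

/-- From the position where Red holds `R`, Blue holds `B` and it is Red's turn iff `t`, Red can
force the game to end on a full board whose red cells satisfy `W`. -/
inductive RedForces : Finset α → Finset α → Bool → Prop
  | full {R B : Finset α} {t : Bool} : R ∪ B = univ → W R → RedForces R B t
  | red {R B : Finset α} (m : α) : m ∉ R ∪ B → RedForces (insert m R) B false → RedForces R B true
  | blue {R B : Finset α} : (∃ m, m ∉ R ∪ B) → (∀ m ∉ R ∪ B, RedForces R (insert m B) true) →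
      RedForces R B false

variable {W} {R B : Finset α} {t : Bool}

theorem exists_notMem_of_ne_univ {s : Finset α} (hs : s ≠ univ) : ∃ x, x ∉ s := by
  by_contra! h
  exact hs (eq_univ_iff_forall.2 h)

theorem card_compl_insert_lt {s : Finset α} {m : α} (hm : m ∉ s) :
    (insert m s)ᶜ.card < sᶜ.card :=
  card_lt_card (compl_ssubset_compl.2 (ssubset_insert hm))

theorem RedForces.win_of_full (h : RedForces W R B t) (hfull : R ∪ B = univ) : W R := by
  cases h with
  | full _ hW => exact hW
  | red m hm _ => exact absurd (hfull ▸ mem_univ m) hm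
  | blue hfree _ =>
    obtain ⟨m, hm⟩ := hfree
    exact absurd (hfull ▸ mem_univ m) hm

theorem RedForces.exists_move (h : RedForces W R B true) {x : α} (hx : x ∉ R ∪ B) :
    ∃ m ∉ R ∪ B, RedForces W (insert m R) B false := by
  cases h with
  | full hfull _ => exact absurd (hfull ▸ mem_univ x) hx
  | red m hm h => exact ⟨m, hm, h⟩

theorem RedForces.of_blue_move (h : RedForces W R B false) {m : α} (hm : m ∉ R ∪ B) :
    RedForces W R (insert m B) true := by
  cases h with
  | full hfull _ => exact absurd (hfull ▸ mem_univ m) hm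
  | blue _ h => exact h m hm

theorem RedForces.insert_red (hW : Monotone W) (h : RedForces W R B t) {x : α}
    (hx : x ∉ R ∪ B) : RedForces W (insert x R) B t := by
  induction h generalizing x with
  | full hfull _ => exact absurd (hfull ▸ mem_univ x) hx
  | @red R B m hm h ih =>
    by_cases hmx : m = x
    · subst hmx
      by_cases hfull : insert m R ∪ B = univ
      · exact .full hfull (h.win_of_full hfull)
      · obtain ⟨z, hz⟩ := exists_notMem_of_ne_univ hfull
        exact .red z hz (ih hz)
    · have hxm : x ∉ insert m R ∪ B := by simp_all [eq_comm]
      refine .red m (by simp_all) ?_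
      rw [insert_comm]
      exact ih hxm
  | @blue R B _ h ih =>
    by_cases hfull : insert x R ∪ B = univ
    · have hfull' : R ∪ insert x B = univ := by rwa [union_insert, ← insert_union]
      exact .full hfull (hW (subset_insert x R) ((h x hx).win_of_full hfull'))
    · refine .blue (exists_notMem_of_ne_univ hfull) fun m hm => ih m ?_ ?_ <;>
        simp_all [eq_comm]

/-- Where Red cannot force `W`, Blue can; transported along `e` with the colors exchanged, Blue's
play is a way for Red, now in Blue's seat, to force `W`. -/
theorem RedForces.mirror (hW : Monotone W) (e : α ≃ α)
    (hsym : ∀ R : Finset α, W R ∨ W (Rᶜ.map e.toEmbedding)) (h : ¬RedForces W R B t) :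
    RedForces W (B.map e.toEmbedding) (R.map e.toEmbedding) !t := by
  induction hk : (R ∪ B)ᶜ.card using Nat.strong_induction_on generalizing R B t with
  | _ k ih =>
  subst hk
  by_cases hfull : R ∪ B = univ
  · have hcompl : Rᶜ ⊆ B := codisjoint_iff_compl_le_right.1 (codisjoint_iff.2 hfull)
    refine .full (by rw [← map_union, union_comm, hfull, map_univ_equiv]) ?_
    exact (hsym R).resolve_left (fun hR => h (.full hfull hR)) |> hW (map_subset_map.2 hcompl)
  obtain ⟨x, hx⟩ := exists_notMem_of_ne_univ hfull
  have hx' : e x ∉ B.map e.toEmbedding ∪ R.map e.toEmbedding := by simp_all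
  cases t with
  | true =>
    refine .blue ⟨e x, hx'⟩ fun m' hm' => ?_
    have hm : e.symm m' ∉ R ∪ B := by simp_all
    simpa using ih _ (card_compl_insert_lt hm) (fun h' => h (.red _ hm h')) (by rw [insert_union])
  | false =>
    have hblue : ∃ m ∉ R ∪ B, ¬RedForces W R (insert m B) true := by
      by_contra! hall
      exact h (.blue ⟨x, hx⟩ hall)
    obtain ⟨m, hm, hlose⟩ := hblue
    refine .red (e m) (by simp_all) ?_
    simpa using ih _ (card_compl_insert_lt hm) hlose (by rw [union_insert])

theorem redForces_empty [Nonempty α] (hW : Monotone W) (e : α ≃ α)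
    (hsym : ∀ R : Finset α, W R ∨ W (Rᶜ.map e.toEmbedding)) : RedForces W ∅ ∅ true := by
  by_contra h
  obtain ⟨x⟩ := ‹Nonempty α›
  have hsecond : RedForces W ∅ ∅ false := by simpa using RedForces.mirror hW e hsym h
  exact h (.red x (by simp) (hsecond.insert_red hW (by simp)))

end Game

section Moves

variable {α : Type*} [DecidableEq α]

open Classical in
/-- The cells claimed at the positions of parity `r` of the move list `l`: Red's for `r = 0`. -/
noncomputable def movesOfParity (l : List α) (r : ℕ) : Finset α :=
  l.toFinset.filter fun x => ∃ j, l[j]? = some x ∧ j % 2 = r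

theorem mem_movesOfParity {l : List α} {r : ℕ} {x : α} :
    x ∈ movesOfParity l r ↔ ∃ j, l[j]? = some x ∧ j % 2 = r := by
  simp only [movesOfParity, mem_filter, List.mem_toFinset, and_iff_right_iff_imp]
  rintro ⟨j, hj, -⟩
  exact List.mem_iff_getElem?.2 ⟨j, hj⟩

theorem mem_movesOfParity_union {l : List α} {x : α} (hx : x ∈ l) :
    x ∈ movesOfParity l 0 ∪ movesOfParity l 1 := by
  obtain ⟨j, hj⟩ := List.mem_iff_getElem?.1 hx
  rcases Nat.mod_two_eq_zero_or_one j with h | h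
  · exact mem_union_left _ (mem_movesOfParity.2 ⟨j, hj, h⟩)
  · exact mem_union_right _ (mem_movesOfParity.2 ⟨j, hj, h⟩)

variable {N : ℕ} (p : Fin N → α)

theorem mem_movesOfParity_take_ofFn {i r : ℕ} {x : α} :
    x ∈ movesOfParity ((List.ofFn p).take i) r ↔
      ∃ j : Fin N, (j : ℕ) < i ∧ (j : ℕ) % 2 = r ∧ p j = x := by
  simp only [mem_movesOfParity, List.getElem?_take, List.getElem?_ofFn]
  constructor
  · rintro ⟨j, hj, hr⟩
    split_ifs at hj with h1 h2
    exact ⟨⟨j, h2⟩, h1, hr, Option.some_inj.1 hj⟩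
  · rintro ⟨j, hj, hr, rfl⟩
    exact ⟨j, by simp [hj, j.2], hr⟩

theorem movesOfParity_take_succ (i : Fin N) (r : ℕ) :
    movesOfParity ((List.ofFn p).take (i + 1)) r =
      if (i : ℕ) % 2 = r then insert (p i) (movesOfParity ((List.ofFn p).take i) r)
      else movesOfParity ((List.ofFn p).take i) r := by
  ext x
  split_ifs with h <;> simp only [mem_insert, mem_movesOfParity_take_ofFn]
  · constructor
    · rintro ⟨j, hj, hr, rfl⟩
      rcases Nat.lt_succ_iff_lt_or_eq.1 hj with hj | hj
      · exact .inr ⟨j, hj, hr, rfl⟩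
      · exact .inl (congrArg p (Fin.ext hj))
    · rintro (rfl | ⟨j, hj, hr, rfl⟩)
      · exact ⟨i, by omega, h, rfl⟩
      · exact ⟨j, by omega, hr, rfl⟩
  · constructor
    · rintro ⟨j, hj, hr, rfl⟩
      have : (j : ℕ) ≠ i := fun e => h (e ▸ hr)
      exact ⟨j, by omega, hr, rfl⟩
    · rintro ⟨j, hj, hr, rfl⟩
      exact ⟨j, by omega, hr, rfl⟩

variable {p}

theorem notMem_movesOfParity_take (hp : Function.Injective p) (i : Fin N) (r : ℕ) :
    p i ∉ movesOfParity ((List.ofFn p).take i) r := by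
  rw [mem_movesOfParity_take_ofFn]
  rintro ⟨j, hj, -, hji⟩
  exact hj.ne (congrArg Fin.val (hp hji))

end Moves

section Strategy

variable {α : Type*} [Fintype α] [DecidableEq α] [Nonempty α] {W : Finset α → Prop}

variable (W) in
open Classical in
noncomputable def forcingStrategy (l : List α) : α :=
  if h : ∃ m ∉ l, RedForces W (insert m (movesOfParity l 0)) (movesOfParity l 1) false then
    h.choose
  else if h' : ∃ m, m ∉ l then h'.choose else Classical.arbitrary α

theorem forcingStrategy_notMem {l : List α} (hl : l.length < Fintype.card α) :
    forcingStrategy W l ∉ l := by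
  have hfree : ∃ m, m ∉ l := by
    by_contra! h
    have := card_le_card (fun x _ => List.mem_toFinset.2 (h x) : univ ⊆ l.toFinset)
    have := l.toFinset_card_le
    rw [card_univ] at *
    omega
  unfold forcingStrategy
  split_ifs with h
  · exact h.choose_spec.1
  · exact hfree.choose_spec

theorem forcingStrategy_spec {l : List α}
    (h : ∃ m ∉ l, RedForces W (insert m (movesOfParity l 0)) (movesOfParity l 1) false) :
    RedForces W (insert (forcingStrategy W l) (movesOfParity l 0)) (movesOfParity l 1) false := by
  rw [forcingStrategy, dif_pos h]
  exact h.choose_spec.2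

variable {N : ℕ} {p : Fin N → α}

theorem redForces_take (hforce : RedForces W ∅ ∅ true) (hp : Function.Injective p)
    (hσ : ∀ i : Fin N, (i : ℕ) % 2 = 0 → p i = forcingStrategy W ((List.ofFn p).take i))
    (i : ℕ) (hi : i ≤ N) :
    RedForces W (movesOfParity ((List.ofFn p).take i) 0)
      (movesOfParity ((List.ofFn p).take i) 1) (decide (i % 2 = 0)) := by
  induction i with
  | zero => simpa [movesOfParity] using hforce
  | succ i ih =>
    have ih := ih (by omega)
    set i' : Fin N := ⟨i, hi⟩
    have hfresh : p i' ∉ movesOfParity ((List.ofFn p).take i) 0 ∪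
        movesOfParity ((List.ofFn p).take i) 1 := by
      simpa using ⟨notMem_movesOfParity_take hp i' 0, notMem_movesOfParity_take hp i' 1⟩
    rw [movesOfParity_take_succ p i' 0, movesOfParity_take_succ p i' 1]
    rcases Nat.mod_two_eq_zero_or_one i with h | h
    · have h' : (i + 1) % 2 = 1 := by omega
      simp only [i', h, h', decide_true, zero_ne_one, reduceIte] at ih ⊢
      obtain ⟨m, hm, hwin⟩ := ih.exists_move hfresh
      rw [hσ i' h]
      exact forcingStrategy_spec ⟨m, fun hml => hm (mem_movesOfParity_union hml), hwin⟩
    · have h' : (i + 1) % 2 = 0 := by omega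
      simp only [i', h, h', decide_true, decide_false, one_ne_zero, reduceIte] at ih ⊢
      exact ih.of_blue_move hfresh

theorem forcingStrategy_wins (hforce : RedForces W ∅ ∅ true) (hN : Fintype.card α = N)
    (hp : Function.Injective p)
    (hσ : ∀ i : Fin N, (i : ℕ) % 2 = 0 → p i = forcingStrategy W ((List.ofFn p).take i))
    (χ : α → Bool) (hχ : ∀ i : Fin N, χ (p i) = decide ((i : ℕ) % 2 = 0)) :
    W (univ.filter fun x => χ x = true) := by
  have hsurj : Function.Surjective p :=
    ((Fintype.bijective_iff_injective_and_card p).2 ⟨hp, by simp [hN]⟩).2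
  have hmem (i : Fin N) (r : ℕ) :
      p i ∈ movesOfParity ((List.ofFn p).take N) r ↔ (i : ℕ) % 2 = r := by
    rw [mem_movesOfParity_take_ofFn]
    exact ⟨fun ⟨j, _, hj, hji⟩ => hp hji ▸ hj, fun h => ⟨i, i.2, h, rfl⟩⟩
  have hfull : movesOfParity ((List.ofFn p).take N) 0 ∪
      movesOfParity ((List.ofFn p).take N) 1 = univ := by
    refine eq_univ_iff_forall.2 fun x => ?_
    obtain ⟨i, rfl⟩ := hsurj x
    simpa [hmem] using Nat.mod_two_eq_zero_or_one i
  have hred : movesOfParity ((List.ofFn p).take N) 0 = univ.filter fun x => χ x = true := by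
    ext x
    obtain ⟨i, rfl⟩ := hsurj x
    simp [hmem, hχ]
  exact hred ▸ (redForces_take hforce hp hσ N le_rfl).win_of_full hfull

end Strategy

end PositionalGame

theorem redWinsTotal_swap_of_blueWinsTotal {n : ℕ} {χ : Fin n × Fin n → Bool}
    (h : BlueWinsTotal χ) : RedWinsTotal fun q => !χ q.swap := by
  obtain ⟨k, f, hadj, hcol, h0, hlast⟩ := h
  refine ⟨k, fun i => (f i).swap, fun i => ?_, fun i => by simpa using hcol i, h0, hlast⟩
  have := hadj i
  rw [hexAdj_iff] at this ⊢
  simp only [finCell, Prod.fst_swap, Prod.snd_swap] at this ⊢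
  omega

def RedWinsWith {n : ℕ} (R : Finset (Fin n × Fin n)) : Prop :=
  RedWinsTotal fun q => decide (q ∈ R)

theorem redWinsWith_mono {n : ℕ} : Monotone (RedWinsWith (n := n)) := by
  rintro R R' hRR' ⟨k, f, hadj, hcol, h0, hlast⟩
  refine ⟨k, f, hadj, fun i => ?_, h0, hlast⟩
  simpa using hRR' (by simpa using hcol i)

theorem redWinsWith_or_compl_swap {n : ℕ} (hn : 0 < n) (R : Finset (Fin n × Fin n)) :
    RedWinsWith R ∨ RedWinsWith (Rᶜ.map (Equiv.prodComm _ _).toEmbedding) := by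
  refine (redWinsTotal_or_blueWinsTotal hn _).imp id fun h => ?_
  simpa [RedWinsWith, Finset.mem_map_equiv] using redWinsTotal_swap_of_blueWinsTotal h

/-- The first player (Red) has a winning strategy in finite Hex on the `n × n` board:
there is a Red strategy `σ` (assigning to each position of even length an unclaimed cell)
such that every complete play of `n²` moves consistent with `σ` results in a total
coloring (Red's cells red, Blue's cells blue) that Red wins. -/
theorem finite_hex_first_player_winning_strategy (n : ℕ) (hn : 1 ≤ n) :
    ∃ σ : List (Fin n × Fin n) → Fin n × Fin n,
      (∀ l : List (Fin n × Fin n),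
        l.Nodup → l.length % 2 = 0 → l.length < n * n → σ l ∉ l) ∧
      ∀ p : Fin (n * n) → Fin n × Fin n, Function.Injective p →
        (∀ i : Fin (n * n), (i : ℕ) % 2 = 0 → p i = σ ((List.ofFn p).take i)) →
        ∀ χ : Fin n × Fin n → Bool,
          (∀ i : Fin (n * n), χ (p i) = decide ((i : ℕ) % 2 = 0)) →
          RedWinsTotal χ := by
  have : Nonempty (Fin n × Fin n) := ⟨(⟨0, hn⟩, ⟨0, hn⟩)⟩
  have hcard : Fintype.card (Fin n × Fin n) = n * n := by simp
  have hforce := PositionalGame.redForces_empty redWinsWith_mono (Equiv.prodComm _ _)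
    (redWinsWith_or_compl_swap hn)
  refine ⟨PositionalGame.forcingStrategy RedWinsWith,
    fun l _ _ hl => PositionalGame.forcingStrategy_notMem (hcard ▸ hl), fun p hp hσ χ hχ => ?_⟩
  simpa [RedWinsWith] using PositionalGame.forcingStrategy_wins hforce hcard hp hσ χ hχ
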